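/- arXiv:2203.02362 — 2 statements merged into one kernel-verified Lean document; each statement's English description precedes it below -/
import Mathlib

section
/- Let G be a finite group whose power graph is a cograph, and let x ∈ G have prime order p. If the centralizer C_G(x) is not a p-group, then x is not a p-th power in G, i.e., there is no g ∈ G with g^p = x. -/
/-- The power graph of a group: `g` and `h` are adjacent iff they are distinct and
one is a power (integer power) of the other. -/
def powerGraph (G : Type*) [Group G] : SimpleGraph G where
  Adj g h := g ≠ h ∧ (h ∈ Subgroup.zpowers g ∨ g ∈ Subgroup.zpowers h)
  symm := ⟨fun g h ⟨hne, hor⟩ => ⟨hne.symm, hor.symm⟩⟩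
  loopless := ⟨fun g h => h.1 rfl⟩

/-- `a, b, c, d` induce a path on four vertices in `Γ`. -/
def InducedP4 {V : Type*} (Γ : SimpleGraph V) (a b c d : V) : Prop :=
  a ≠ c ∧ a ≠ d ∧ b ≠ d ∧ Γ.Adj a b ∧ Γ.Adj b c ∧ Γ.Adj c d ∧
    ¬Γ.Adj a c ∧ ¬Γ.Adj a d ∧ ¬Γ.Adj b d

/-- A graph is a cograph iff it has no induced `P4`. -/
def IsCograph {V : Type*} (Γ : SimpleGraph V) : Prop :=
  ∀ a b c d : V, ¬ InducedP4 Γ a b c d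

/-- The prime graph (Gruenberg–Kegel graph) of a group, as a graph on `ℕ`. -/
def primeGraph (G : Type*) [Group G] : SimpleGraph ℕ where
  Adj p q := p ≠ q ∧ p.Prime ∧ q.Prime ∧ ∃ g : G, orderOf g = p * q
  symm := ⟨fun p q ⟨hne, hp, hq, g, hg⟩ => ⟨hne.symm, hq, hp, g, by rwa [Nat.mul_comm]⟩⟩
  loopless := ⟨fun p h => h.1 rfl⟩

/-!
If `g ^ p = x` with `x` of order `p`, then `g` has order `p ^ 2`. Since `C_G(x)` is not a
`p`-group, Cauchy's theorem gives `c` commuting with `x` of prime order `q ≠ p`; then `x * c`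
has order `p * q` and both `x` and `c` are powers of it. Comparing the orders `p ^ 2, p, p * q, q`
under divisibility shows that `g - x - x * c - c` is an induced path in the power graph.
-/

open Subgroup

section PowerGraph

variable {G : Type*} [Group G] {a b : G}

lemma ne_of_not_orderOf_dvd (h : ¬ orderOf a ∣ orderOf b) : a ≠ b := by
  rintro rfl
  exact h dvd_rfl

lemma powerGraph_adj_of_mem_zpowers (hba : b ∈ zpowers a) (h : ¬ orderOf a ∣ orderOf b) :
    (powerGraph G).Adj a b :=
  ⟨ne_of_not_orderOf_dvd h, Or.inl hba⟩

lemma powerGraph_not_adj_of_not_dvd (hab : ¬ orderOf a ∣ orderOf b)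
    (hba : ¬ orderOf b ∣ orderOf a) : ¬ (powerGraph G).Adj a b := by
  rintro ⟨-, h | h⟩
  · exact hba (orderOf_dvd_of_mem_zpowers h)
  · exact hab (orderOf_dvd_of_mem_zpowers h)

lemma inducedP4_powerGraph_of_orderOf {p q : ℕ} (hp : p.Prime) (hq : q.Prime) (hpq : p ≠ q)
    {a b c d : G} (ha : orderOf a = p ^ 2) (hb : orderOf b = p) (hc : orderOf c = p * q)
    (hd : orderOf d = q) (hba : b ∈ zpowers a) (hbc : b ∈ zpowers c) (hdc : d ∈ zpowers c) :
    InducedP4 (powerGraph G) a b c d := by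
  have hpq' : ¬ p ∣ q := fun h => hpq ((Nat.prime_dvd_prime_iff_eq hp hq).mp h)
  have hqp' : ¬ q ∣ p := fun h => hpq ((Nat.prime_dvd_prime_iff_eq hq hp).mp h).symm
  have := hp.two_le
  have := hq.two_le
  have hab : ¬ orderOf a ∣ orderOf b := by
    rw [ha, hb]
    exact fun h => (Nat.le_of_dvd hp.pos h).not_gt (by nlinarith)
  have hcb : ¬ orderOf c ∣ orderOf b := by
    rw [hc, hb]
    exact fun h => (Nat.le_of_dvd hp.pos h).not_gt (by nlinarith)
  have hcd : ¬ orderOf c ∣ orderOf d := by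
    rw [hc, hd]
    exact fun h => (Nat.le_of_dvd hq.pos h).not_gt (by nlinarith)
  have hac : ¬ orderOf a ∣ orderOf c := by
    rw [ha, hc, pow_two, Nat.mul_dvd_mul_iff_left hp.pos]
    exact hpq'
  have hca : ¬ orderOf c ∣ orderOf a := by
    rw [ha, hc, pow_two, Nat.mul_dvd_mul_iff_left hp.pos]
    exact hqp'
  have had : ¬ orderOf a ∣ orderOf d := by
    rw [ha, hd]
    exact fun h => hpq' ((dvd_pow_self p two_ne_zero).trans h)
  have hda : ¬ orderOf d ∣ orderOf a := by
    rw [ha, hd]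
    exact fun h => hqp' (hq.dvd_of_dvd_pow h)
  have hbd : ¬ orderOf b ∣ orderOf d := by rwa [hb, hd]
  have hdb : ¬ orderOf d ∣ orderOf b := by rwa [hb, hd]
  exact ⟨ne_of_not_orderOf_dvd hac, ne_of_not_orderOf_dvd had, ne_of_not_orderOf_dvd hbd,
    powerGraph_adj_of_mem_zpowers hba hab, (powerGraph_adj_of_mem_zpowers hbc hcb).symm,
    powerGraph_adj_of_mem_zpowers hdc hcd, powerGraph_not_adj_of_not_dvd hac hca,
    powerGraph_not_adj_of_not_dvd had hda, powerGraph_not_adj_of_not_dvd hbd hdb⟩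

end PowerGraph

section Orders

variable {G : Type*} [Group G] {a b : G}

lemma Commute.left_mem_zpowers_mul (h : Commute a b) (hab : (orderOf a).Coprime (orderOf b)) :
    a ∈ zpowers (a * b) := by
  have hpow : (a * b) ^ orderOf b = a ^ orderOf b := by
    rw [h.mul_pow, pow_orderOf_eq_one, mul_one]
  have ha : a ∈ zpowers (a ^ orderOf b) := mem_zpowers_pow_iff.mpr hab.symm
  exact zpowers_le.mpr (hpow ▸ npow_mem_zpowers (a * b) (orderOf b)) ha

lemma Commute.right_mem_zpowers_mul (h : Commute a b) (hab : (orderOf a).Coprime (orderOf b)) :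
    b ∈ zpowers (a * b) :=
  h.eq ▸ h.symm.left_mem_zpowers_mul hab.symm

lemma orderOf_eq_sq_of_orderOf_pow {p : ℕ} (hp : p.Prime) (h : orderOf (a ^ p) = p) :
    orderOf a = p ^ 2 := by
  have := Fact.mk hp
  refine orderOf_eq_prime_pow (n := 1) ?_ ?_
  · rw [pow_one, ← orderOf_eq_one_iff, h]
    exact hp.one_lt.ne'
  · have h1 := pow_orderOf_eq_one (a ^ p)
    rwa [h, ← pow_mul, ← sq] at h1

lemma exists_prime_ne_orderOf_of_not_isPGroup [Finite G] {p : ℕ} (h : ¬ IsPGroup p G) :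
    ∃ q, q.Prime ∧ q ≠ p ∧ ∃ g : G, orderOf g = q := by
  by_contra! hall
  refine h (IsPGroup.of_card (Nat.eq_prime_pow_of_unique_prime_dvd Nat.card_pos.ne' ?_))
  intro q hq hdvd
  by_contra hqp
  obtain ⟨g, hg⟩ := exists_prime_orderOf_dvd_card' (hp := ⟨hq⟩) q hdvd
  exact hall q hq hqp g hg

end Orders

theorem not_pth_power_of_centralizer_not_pGroup
    {G : Type*} [Group G] [Finite G]
    (hco : IsCograph (powerGraph G))
    {p : ℕ} (hp : p.Prime) {x : G} (hx : orderOf x = p)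
    (hcent : ¬ IsPGroup p (Subgroup.centralizer ({x} : Set G))) :
    ¬ ∃ g : G, g ^ p = x := by
  rintro ⟨g, rfl⟩
  obtain ⟨q, hq, hqp, ⟨c, hc_cent⟩, hc⟩ := exists_prime_ne_orderOf_of_not_isPGroup hcent
  rw [Subgroup.orderOf_mk] at hc
  have hcomm : Commute (g ^ p) c := (mem_centralizer_singleton_iff.mp hc_cent).symm
  have hcop : (orderOf (g ^ p)).Coprime (orderOf c) := by
    rw [hx, hc]
    exact (Nat.coprime_primes hp hq).mpr hqp.symm
  have hmul : orderOf (g ^ p * c) = p * q := by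
    rw [hcomm.orderOf_mul_eq_mul_orderOf_of_coprime hcop, hx, hc]
  exact hco g (g ^ p) (g ^ p * c) c <|
    inducedP4_powerGraph_of_orderOf hp hq hqp.symm (orderOf_eq_sq_of_orderOf_pow hp hx) hx hmul hc
      (npow_mem_zpowers g p) (hcomm.left_mem_zpowers_mul hcop) (hcomm.right_mem_zpowers_mul hcop)
end

section
/- Let G be a finite group whose power graph is a cograph, and let x, w ∈ G be commuting elements with |x| = p, |w| = q for primes q < p. Then C_G(x) = ⟨x, w⟩ and C_G(x) is isomorphic to C_p × C_q. -/
open Subgroup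

section ZPowers

variable {G : Type*} [Group G]

theorem mem_zpowers_of_mem_zpowers_of_orderOf_eq [Finite G] {a b : G} (h : a ∈ zpowers b)
    (hab : orderOf a = orderOf b) : b ∈ zpowers a := by
  rw [eq_of_le_of_card_ge (zpowers_le.mpr h) (by rw [Nat.card_zpowers, Nat.card_zpowers, hab])]
  exact mem_zpowers b

theorem eq_one_of_mem_zpowers_of_coprime {a b : G} (h : a ∈ zpowers b)
    (hab : (orderOf a).Coprime (orderOf b)) : a = 1 :=
  orderOf_eq_one_iff.mp (hab.eq_one_of_dvd (orderOf_dvd_of_mem_zpowers h))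

theorem Commute.mem_zpowers_mul_left {a b : G} (h : Commute a b)
    (hab : (orderOf a).Coprime (orderOf b)) : a ∈ zpowers (a * b) := by
  have hpow : (a * b) ^ orderOf b = a ^ orderOf b := by
    rw [h.mul_pow, pow_orderOf_eq_one, mul_one]
  exact zpowers_le.mpr (hpow ▸ pow_mem (mem_zpowers _) _) (mem_zpowers_pow_iff.mpr hab.symm)

theorem Commute.mem_zpowers_mul_right {a b : G} (h : Commute a b)
    (hab : (orderOf a).Coprime (orderOf b)) : b ∈ zpowers (a * b) :=
  h.eq ▸ h.symm.mem_zpowers_mul_left hab.symm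

theorem Commute.pow_orderOf_mem_zpowers {a b g : G} (h : Commute a b)
    (hg : g ∈ zpowers (a * b)) : g ^ orderOf a ∈ zpowers b := by
  obtain ⟨k, rfl⟩ := mem_zpowers_iff.mp hg
  rw [← zpow_natCast, ← zpow_mul, mul_comm, zpow_mul, zpow_natCast, h.mul_pow,
    pow_orderOf_eq_one, one_mul]
  exact zpow_mem (pow_mem (mem_zpowers b) _) k

theorem Commute.mem_zpowers_of_mem_zpowers_mul {a b g : G} (h : Commute a b)
    (hg : g ∈ zpowers (a * b)) (hga : (orderOf g).Coprime (orderOf a)) : g ∈ zpowers b :=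
  zpowers_le.mpr (h.pow_orderOf_mem_zpowers hg) (mem_zpowers_pow_iff.mpr hga.symm)

theorem mem_of_pow_mem_of_pow_mem {H : Subgroup G} {g : G} {m n : ℕ} (hmn : m.Coprime n)
    (hm : g ^ m ∈ H) (hn : g ^ n ∈ H) : g ∈ H := by
  have hbezout : g = (g ^ m) ^ m.gcdA n * (g ^ n) ^ m.gcdB n := by
    rw [← zpow_natCast, ← zpow_natCast, ← zpow_mul, ← zpow_mul, ← zpow_add, ← Nat.gcd_eq_gcd_ab,
      hmn.gcd_eq_one, Nat.cast_one, zpow_one]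
  rw [hbezout]
  exact mul_mem (zpow_mem hm _) (zpow_mem hn _)

/-- Conjugation by `y` restricts to an automorphism of `⟨w⟩` whose order divides both `orderOf y`
and `|Aut ⟨w⟩| = φ (orderOf w)`. -/
theorem Commute.of_conj_mem_zpowers [Finite G] {y w : G} (hconj : y * w * y⁻¹ ∈ zpowers w)
    (hcop : (orderOf y).Coprime (orderOf w).totient) : Commute y w := by
  have hy : y ∈ normalizer (zpowers w : Set G) := by
    refine mem_normalizer_fintype fun n hn ↦ ?_
    obtain ⟨k, rfl⟩ := mem_zpowers_iff.mp hn
    simpa only [SetLike.mem_coe, conj_zpow] using zpow_mem hconj k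
  have hf : (zpowers w).normalizerMonoidHom ⟨y, hy⟩ = 1 := by
    rw [← orderOf_eq_one_iff, ← Nat.dvd_one, ← hcop.gcd_eq_one]
    refine Nat.dvd_gcd ((orderOf_map_dvd _ _).trans (orderOf_mk y hy).dvd) ?_
    rw [← Nat.card_zpowers w, ← IsCyclic.card_mulAut]
    exact orderOf_dvd_natCard _
  have hw := congrArg (fun f : MulAut (zpowers w) ↦ ((f ⟨w, mem_zpowers w⟩ : zpowers w) : G)) hf
  simpa [commute_iff_eq, mul_inv_eq_iff_eq_mul] using hw

theorem nonempty_zpowers_mulEquiv_prod {g : G} {m n : ℕ} [NeZero m] [NeZero n]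
    (hmn : m.Coprime n) (hg : orderOf g = m * n) :
    Nonempty (zpowers g ≃* Multiplicative (ZMod m) × Multiplicative (ZMod n)) := by
  have : IsCyclic (Multiplicative (ZMod m) × Multiplicative (ZMod n)) :=
    Group.isCyclic_prod_iff.mpr ⟨inferInstance, inferInstance, by simpa using hmn⟩
  exact ⟨mulEquivOfCyclicCardEq (by simp [Nat.card_zpowers, hg])⟩

end ZPowers

section PowerGraph

variable {G : Type*} [Group G]

theorem Commute.powerGraph_adj_mul_right {a b : G} (h : Commute a b)
    (hab : (orderOf a).Coprime (orderOf b)) (hb : b ≠ 1) : (powerGraph G).Adj a (a * b) :=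
  ⟨fun e ↦ hb (left_eq_mul.mp e), Or.inr (h.mem_zpowers_mul_left hab)⟩

theorem Commute.powerGraph_adj_mul_left {a b : G} (h : Commute a b)
    (hab : (orderOf a).Coprime (orderOf b)) (ha : a ≠ 1) : (powerGraph G).Adj b (a * b) :=
  h.eq ▸ h.symm.powerGraph_adj_mul_right hab.symm ha

theorem orderOf_dvd_or_dvd_of_powerGraph_adj {a b : G} (h : (powerGraph G).Adj a b) :
    orderOf a ∣ orderOf b ∨ orderOf b ∣ orderOf a :=
  h.2.symm.imp orderOf_dvd_of_mem_zpowers orderOf_dvd_of_mem_zpowers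

/-- The induced path `b - ab - a - ac`. -/
theorem IsCograph.mem_zpowers_or_mem_zpowers (hco : IsCograph (powerGraph G)) {a b c : G}
    (ha : a ≠ 1) (hab : Commute a b) (hac : Commute a c) (hb : (orderOf a).Coprime (orderOf b))
    (hc : (orderOf a).Coprime (orderOf c)) : b ∈ zpowers c ∨ c ∈ zpowers b := by
  by_contra! ⟨hbc, hcb⟩
  have hb1 : b ≠ 1 := fun e ↦ hbc (e ▸ one_mem _)
  have hc1 : c ≠ 1 := fun e ↦ hcb (e ▸ one_mem _)
  have ha_b : a ∉ zpowers b := fun h ↦ ha (eq_one_of_mem_zpowers_of_coprime h hb)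
  have hb_a : b ∉ zpowers a := fun h ↦ hb1 (eq_one_of_mem_zpowers_of_coprime h hb.symm)
  have hb_ac : b ∉ zpowers (a * c) :=
    fun h ↦ hbc (hac.mem_zpowers_of_mem_zpowers_mul h hb.symm)
  have hc_ab : c ∉ zpowers (a * b) :=
    fun h ↦ hcb (hab.mem_zpowers_of_mem_zpowers_mul h hc.symm)
  refine hco b (a * b) a (a * c) ⟨?_, ?_, ?_, hab.powerGraph_adj_mul_left hb ha,
    (hab.powerGraph_adj_mul_right hb hb1).symm, hac.powerGraph_adj_mul_right hc hc1, ?_, ?_, ?_⟩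
  · rintro rfl
    exact ha_b (mem_zpowers _)
  · rintro rfl
    exact ha_b (hac.mem_zpowers_mul_left hc)
  · intro e
    exact hbc (mul_left_cancel e ▸ mem_zpowers b)
  · rintro ⟨-, h | h⟩
    exacts [ha_b h, hb_a h]
  · rintro ⟨-, h | h⟩
    exacts [ha_b (zpowers_le.mpr h (hac.mem_zpowers_mul_left hc)), hb_ac h]
  · rintro ⟨-, h | h⟩
    exacts [hc_ab (zpowers_le.mpr h (hac.mem_zpowers_mul_right hc)),
      hb_ac (zpowers_le.mpr h (hab.mem_zpowers_mul_right hb))]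

theorem IsCograph.mem_zpowers_of_orderOf_eq [Finite G] (hco : IsCograph (powerGraph G))
    {a b c : G} (ha : a ≠ 1) (hab : Commute a b) (hac : Commute a c)
    (hb : (orderOf a).Coprime (orderOf b)) (hbc : orderOf c = orderOf b) : c ∈ zpowers b :=
  (hco.mem_zpowers_or_mem_zpowers ha hab hac hb (hbc ▸ hb)).elim
    (mem_zpowers_of_mem_zpowers_of_orderOf_eq · hbc.symm) id

/-- The induced path `a - ab - b - c`. -/
theorem IsCograph.powerGraph_adj_or_adj (hco : IsCograph (powerGraph G)) {a b c : G}
    (ha : a ≠ 1) (hb : b ≠ 1) (hab : Commute a b) (hcop : (orderOf a).Coprime (orderOf b))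
    (hbc : b ∈ zpowers c) (hne : b ≠ c) :
    (powerGraph G).Adj a c ∨ (powerGraph G).Adj (a * b) c := by
  by_cases hc : c = a * b
  · exact Or.inl (hc ▸ hab.powerGraph_adj_mul_right hcop hb)
  by_contra! h
  refine hco a (a * b) b c ⟨?_, ?_, Ne.symm hc, hab.powerGraph_adj_mul_right hcop hb,
    (hab.powerGraph_adj_mul_left hcop ha).symm, ⟨hne, Or.inr hbc⟩, ?_, h.1, h.2⟩
  · rintro rfl
    exact ha (eq_one_of_mem_zpowers_of_coprime (mem_zpowers a) hcop)
  · rintro rfl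
    exact hb (eq_one_of_mem_zpowers_of_coprime hbc hcop.symm)
  · rintro ⟨-, h | h⟩
    exacts [hb (eq_one_of_mem_zpowers_of_coprime h hcop.symm),
      ha (eq_one_of_mem_zpowers_of_coprime h hcop)]

theorem IsCograph.not_mem_zpowers_of_orderOf_eq_sq (hco : IsCograph (powerGraph G)) {a b c : G}
    (hab : Commute a b) (ha : (orderOf a).Prime) (hb : (orderOf b).Prime)
    (hne : orderOf a ≠ orderOf b) (hc : orderOf c = orderOf b ^ 2) : b ∉ zpowers c := by
  intro hbc
  have hcop : (orderOf a).Coprime (orderOf b) := (Nat.coprime_primes ha hb).mpr hne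
  have hcop2 : (orderOf a).Coprime (orderOf b ^ 2) := hcop.pow_right 2
  have ha1 : a ≠ 1 := mt orderOf_eq_one_iff.mpr ha.ne_one
  have hb1 : b ≠ 1 := mt orderOf_eq_one_iff.mpr hb.ne_one
  have hbc' : b ≠ c := by rintro rfl; nlinarith [hb.two_le]
  rcases hco.powerGraph_adj_or_adj ha1 hb1 hab hcop hbc hbc' with h | h
  all_goals
    have := orderOf_dvd_or_dvd_of_powerGraph_adj h
    rw [hc] at this
  · rcases this with h | h
    · exact ha.ne_one (hcop2.eq_one_of_dvd h)
    · exact hb.ne_one (hcop.symm.eq_one_of_dvd ((dvd_pow_self _ two_ne_zero).trans h))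
  · rw [hab.orderOf_mul_eq_mul_orderOf_of_coprime hcop, sq] at this
    rcases this with h | h
    · exact ha.ne_one (hcop2.eq_one_of_dvd ((dvd_mul_right _ _).trans (sq (orderOf b) ▸ h)))
    · exact hb.ne_one (hcop.symm.eq_one_of_dvd (Nat.dvd_of_mul_dvd_mul_right hb.pos h))

end PowerGraph

theorem Nat.dvd_mul_of_squarefree {n p q : ℕ} (hn : Squarefree n) (hpq : p ≠ q)
    (h : ∀ r, r.Prime → r ∣ n → r = p ∨ r = q) : n ∣ p * q := by
  rw [← Nat.prod_primeFactors_of_squarefree hn, ← Finset.prod_pair (f := fun r ↦ r) hpq]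
  refine Finset.prod_dvd_prod_of_subset _ _ _ fun r hr ↦ ?_
  rw [Nat.mem_primeFactors] at hr
  simpa using h r hr.1 hr.2.1

section Centralizer

variable {G : Type*} [Group G] [Finite G] {x w y : G}

theorem IsCograph.not_sq_dvd_orderOf (hco : IsCograph (powerGraph G)) {a b : G}
    (hab : Commute a b) (ha : (orderOf a).Prime) (hb : (orderOf b).Prime)
    (hne : orderOf a ≠ orderOf b) (hy : ∀ z ∈ zpowers y, orderOf z = orderOf b → z ∈ zpowers b) :
    ¬ orderOf b ^ 2 ∣ orderOf y := by
  intro hdvd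
  set c := y ^ (orderOf y / orderOf b ^ 2)
  have hc : orderOf c = orderOf b ^ 2 := orderOf_pow_orderOf_div (orderOf_pos y).ne' hdvd
  set z := c ^ (orderOf c / orderOf b)
  have hz : orderOf z = orderOf b :=
    orderOf_pow_orderOf_div (orderOf_pos c).ne' (hc ▸ dvd_pow_self _ two_ne_zero)
  have hzb : z ∈ zpowers b := hy z (pow_mem (pow_mem (mem_zpowers y) _) _) hz
  have hbc : b ∈ zpowers c :=
    zpowers_le.mpr (pow_mem (mem_zpowers c) _) (mem_zpowers_of_mem_zpowers_of_orderOf_eq hzb hz)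
  exact hco.not_mem_zpowers_of_orderOf_eq_sq hab ha hb hne hc hbc

/-- `y` normalizes `⟨w⟩` because its conjugates of `w` still centralize `x`, and
`orderOf x` is coprime to `φ (orderOf w) < orderOf x`. -/
theorem IsCograph.commute_of_orderOf_eq (hco : IsCograph (powerGraph G)) (hxw : Commute x w)
    (hx : (orderOf x).Prime) (hwx : orderOf w < orderOf x) (hxy : Commute x y)
    (hy : orderOf y = orderOf x) : Commute y w := by
  have hcop : (orderOf x).Coprime (orderOf w) :=
    Nat.coprime_of_lt_prime (orderOf_pos w).ne' hwx hx
  have hconj : y * w * y⁻¹ ∈ zpowers w := by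
    refine hco.mem_zpowers_of_orderOf_eq (mt orderOf_eq_one_iff.mpr hx.ne_one) hxw
      ((hxy.mul_right hxw).mul_right hxy.inv_right) hcop ?_
    simpa using (MulAut.conj y).orderOf_eq w
  refine Commute.of_conj_mem_zpowers hconj (hy ▸ Nat.coprime_of_lt_prime ?_ ?_ hx)
  · exact (Nat.totient_pos.mpr (orderOf_pos w)).ne'
  · exact (Nat.totient_le _).trans_lt hwx

theorem IsCograph.mem_zpowers_right_of_orderOf_dvd (hco : IsCograph (powerGraph G))
    (hxw : Commute x w) (hx : (orderOf x).Prime) (hw : (orderOf w).Prime)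
    (hwx : orderOf w < orderOf x) (hxy : Commute x y) (hy : orderOf y ∣ orderOf w) :
    y ∈ zpowers w := by
  rcases (Nat.dvd_prime hw).mp hy with h | h
  · exact orderOf_eq_one_iff.mp h ▸ one_mem _
  · exact hco.mem_zpowers_of_orderOf_eq (mt orderOf_eq_one_iff.mpr hx.ne_one) hxw hxy
      (Nat.coprime_of_lt_prime (orderOf_pos w).ne' hwx hx) h

theorem IsCograph.mem_zpowers_left_of_orderOf_dvd (hco : IsCograph (powerGraph G))
    (hxw : Commute x w) (hx : (orderOf x).Prime) (hw : (orderOf w).Prime)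
    (hwx : orderOf w < orderOf x) (hxy : Commute x y) (hy : orderOf y ∣ orderOf x) :
    y ∈ zpowers x := by
  rcases (Nat.dvd_prime hx).mp hy with h | h
  · exact orderOf_eq_one_iff.mp h ▸ one_mem _
  · exact hco.mem_zpowers_of_orderOf_eq (mt orderOf_eq_one_iff.mpr hw.ne_one) hxw.symm
      (hco.commute_of_orderOf_eq hxw hx hwx hxy h).symm
      (Nat.coprime_of_lt_prime (orderOf_pos w).ne' hwx hx).symm h

theorem IsCograph.prime_dvd_orderOf (hco : IsCograph (powerGraph G)) (hxw : Commute x w)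
    (hx : (orderOf x).Prime) (hw : (orderOf w).Prime) (hwx : orderOf w < orderOf x)
    (hxy : Commute x y) {r : ℕ} (hr : r.Prime) (hry : r ∣ orderOf y) :
    r = orderOf x ∨ r = orderOf w := by
  by_cases hrx : r = orderOf x
  · exact Or.inl hrx
  have hyr : orderOf (y ^ (orderOf y / r)) = r := orderOf_pow_orderOf_div (orderOf_pos y).ne' hry
  rcases hco.mem_zpowers_or_mem_zpowers (mt orderOf_eq_one_iff.mpr hx.ne_one) hxw
    (hxy.pow_right _) (Nat.coprime_of_lt_prime (orderOf_pos w).ne' hwx hx)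
    (hyr ▸ (Nat.coprime_primes hx hr).mpr (Ne.symm hrx)) with h | h
  · exact Or.inr ((Nat.prime_dvd_prime_iff_eq hw hr).mp (hyr ▸ orderOf_dvd_of_mem_zpowers h)).symm
  · exact Or.inr ((Nat.prime_dvd_prime_iff_eq hr hw).mp (hyr ▸ orderOf_dvd_of_mem_zpowers h))

theorem IsCograph.orderOf_dvd_mul_of_commute (hco : IsCograph (powerGraph G))
    (hxw : Commute x w) (hx : (orderOf x).Prime) (hw : (orderOf w).Prime)
    (hwx : orderOf w < orderOf x) (hxy : Commute x y) :
    orderOf y ∣ orderOf x * orderOf w := by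
  have hxz : ∀ z ∈ zpowers y, Commute x z := fun z hz ↦ by
    obtain ⟨k, rfl⟩ := mem_zpowers_iff.mp hz
    exact hxy.zpow_right k
  refine Nat.dvd_mul_of_squarefree ?_ hwx.ne' fun r hr ↦ hco.prime_dvd_orderOf hxw hx hw hwx hxy hr
  refine Nat.squarefree_iff_prime_squarefree.mpr fun r hr hrr ↦ ?_
  rw [← sq] at hrr
  rcases hco.prime_dvd_orderOf hxw hx hw hwx hxy hr (dvd_of_mul_left_dvd hrr) with rfl | rfl
  · exact hco.not_sq_dvd_orderOf hxw.symm hw hx hwx.ne (fun z hz hzx ↦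
      hco.mem_zpowers_left_of_orderOf_dvd hxw hx hw hwx (hxz z hz) hzx.dvd) hrr
  · exact hco.not_sq_dvd_orderOf hxw hx hw hwx.ne' (fun z hz hzw ↦
      hco.mem_zpowers_right_of_orderOf_dvd hxw hx hw hwx (hxz z hz) hzw.dvd) hrr

theorem IsCograph.mem_zpowers_mul_of_commute (hco : IsCograph (powerGraph G))
    (hxw : Commute x w) (hx : (orderOf x).Prime) (hw : (orderOf w).Prime)
    (hwx : orderOf w < orderOf x) (hxy : Commute x y) : y ∈ zpowers (x * w) := by
  have hcop : (orderOf x).Coprime (orderOf w) := Nat.coprime_of_lt_prime (orderOf_pos w).ne' hwx hx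
  have hy : y ^ (orderOf x * orderOf w) = 1 :=
    orderOf_dvd_iff_pow_eq_one.mp (hco.orderOf_dvd_mul_of_commute hxw hx hw hwx hxy)
  refine mem_of_pow_mem_of_pow_mem hcop.symm (zpowers_le.mpr (hxw.mem_zpowers_mul_left hcop) ?_)
    (zpowers_le.mpr (hxw.mem_zpowers_mul_right hcop) ?_)
  · refine hco.mem_zpowers_left_of_orderOf_dvd hxw hx hw hwx (hxy.pow_right _) ?_
    exact orderOf_dvd_of_pow_eq_one (by rw [← pow_mul, mul_comm, hy])
  · refine hco.mem_zpowers_right_of_orderOf_dvd hxw hx hw hwx (hxy.pow_right _) ?_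
    exact orderOf_dvd_of_pow_eq_one (by rw [← pow_mul, hy])

end Centralizer

theorem centralizer_eq_closure_and_iso
    {G : Type*} [Group G] [Finite G]
    (hco : IsCograph (powerGraph G))
    {p q : ℕ} (hp : p.Prime) (hq : q.Prime) (hqp : q < p)
    {x w : G} (hxw : Commute x w) (hx : orderOf x = p) (hw : orderOf w = q) :
    Subgroup.centralizer ({x} : Set G) = Subgroup.closure {x, w} ∧
      Nonempty ((Subgroup.centralizer ({x} : Set G)) ≃*
        Multiplicative (ZMod p) × Multiplicative (ZMod q)) := by
  subst hx hw
  have hcop : (orderOf x).Coprime (orderOf w) := Nat.coprime_of_lt_prime hq.ne_zero hqp hp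
  have hle : centralizer {x} ≤ zpowers (x * w) := fun y hy ↦
    hco.mem_zpowers_mul_of_commute hxw hp hq hqp (mem_centralizer_singleton_iff.mp hy).symm
  have hzpowers_le : zpowers (x * w) ≤ closure {x, w} :=
    zpowers_le.mpr (mul_mem (subset_closure (by simp)) (subset_closure (by simp)))
  have hclosure_le : closure {x, w} ≤ centralizer {x} := by
    rw [closure_le, Set.insert_subset_iff, Set.singleton_subset_iff]
    exact ⟨mem_centralizer_singleton_iff.mpr rfl, mem_centralizer_singleton_iff.mpr hxw.eq.symm⟩
  have hC : centralizer {x} = zpowers (x * w) := le_antisymm hle (hzpowers_le.trans hclosure_le)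
  have : NeZero (orderOf x) := ⟨hp.ne_zero⟩
  have : NeZero (orderOf w) := ⟨hq.ne_zero⟩
  obtain ⟨e⟩ := nonempty_zpowers_mulEquiv_prod hcop
    (hxw.orderOf_mul_eq_mul_orderOf_of_coprime hcop)
  exact ⟨le_antisymm (hle.trans hzpowers_le) hclosure_le, ⟨(MulEquiv.subgroupCongr hC).trans e⟩⟩
end
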